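/- arXiv:2501.13305 — 3 statements merged into one kernel-verified Lean document; each statement's English description precedes it below -/
import Mathlib

section
/- Let C = diag(c₁,…,c_{2n}) be a diagonal 2n×2n matrix over F whose entries satisfy c_k c_{k′} = λ for all k = 1,…,2n, for some fixed λ ≠ 0. Then C satisfies the reflection equation R C₁ R^u C₂ = C₂ R^u C₁ R in End(F^{2n}) ⊗ End(F^{2n}). In particular, taking C = J = Σ_k ε_k e_{kk} (so λ = −1), one has R J₁ R^u J₂ = J₂ R^u J₁ R. -/
/-!
Both sides are compared entrywise. As C₁ and C₂ are diagonal, the ((i,a),(j,b)) entry of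
either side is a sum over one intermediate index pair of a product of two entries of R, and since
every row and column of R has its support in three explicit patterns, each sum collapses to three
terms which match pairwise:
* the diagonal terms, because on the support of R the weights satisfy
  `q^{δ_{zy}-δ_{zy'}} c_z c_w = q^{δ_{xw}-δ_{xw'}} c_x c_y` (this is where `c_k c_{k'} = λ` enters);
* the transposition terms, by the symmetry `R_{(x,y),(z,w)} = R_{(w,z),(y,x)}`;
* the terms supported at `a = i'`, `b = j'`, because `c_j c_{j'} = c_i c_{i'}`.
-/

open scoped Kronecker

set_option synthInstance.maxHeartbeats 1000000
set_option maxHeartbeats 1000000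

noncomputable section

namespace CI

abbrev F : Type := RatFunc ℂ

def q : F := RatFunc.X

def pr (n : ℕ) (i : Fin (2*n)) : Fin (2*n) := ⟨2*n - 1 - i.val, by have := i.isLt; omega⟩

def eps (n : ℕ) (i : Fin (2*n)) : F := if (i : ℕ) < n then 1 else -1

def bar (n : ℕ) (i : Fin (2*n)) : ℤ :=
  if (i : ℕ) < n then (n : ℤ) - (i : ℕ) else (n : ℤ) - (i : ℕ) - 1

def E (n : ℕ) (i j : Fin (2*n)) : Matrix (Fin (2*n)) (Fin (2*n)) F :=
  Matrix.single i j 1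

/-- The R-matrix of type CI, as an element of End(F^{2n}) ⊗ End(F^{2n}). -/
def Rmat (n : ℕ) : Matrix (Fin (2*n) × Fin (2*n)) (Fin (2*n) × Fin (2*n)) F :=
  (∑ i, ∑ j, q ^ ((if i = j then (1:ℤ) else 0) - (if i = pr n j then (1:ℤ) else 0)) •
      (E n i i ⊗ₖ E n j j))
  + (q - q⁻¹) • (∑ i, ∑ j, if i < j then E n i j ⊗ₖ E n j i else 0)
  - (q - q⁻¹) • (∑ i, ∑ j, if i < j then
      (q ^ (bar n j - bar n i) * eps n i * eps n j) • (E n i j ⊗ₖ E n (pr n i) (pr n j)) else 0)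


/-- The partial transpose of R in the first tensor factor:
    (R^u)_{(i,a),(j,b)} = R_{(j,a),(i,b)}. -/
def Ru (n : ℕ) : Matrix (Fin (2*n) × Fin (2*n)) (Fin (2*n) × Fin (2*n)) F :=
  Matrix.of fun p s => Rmat n (s.1, p.2) (p.1, s.2)

/-- The matrix J = Σ_k ε_k e_{kk}. -/
def Jm (n : ℕ) : Matrix (Fin (2*n)) (Fin (2*n)) F :=
  Matrix.diagonal (eps n)

lemma sum_sum_ite_of_imp {α β M : Type*} [Fintype α] [Fintype β] [AddCommMonoid M]
    (p : α → β → Prop) [∀ a b, Decidable (p a b)] (a : α) (b : β) (f : α → β → M)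
    (h : ∀ x y, p x y → x = a ∧ y = b) :
    ∑ x, ∑ y, (if p x y then f x y else 0) = if p a b then f a b else 0 := by
  rw [Fintype.sum_eq_single a fun x hx =>
    Finset.sum_eq_zero fun y _ => if_neg fun hp => hx (h x y hp).1]
  exact Fintype.sum_eq_single b fun y hy => if_neg fun hp => hy (h a y hp).2

def diagWeight (n : ℕ) (x y : Fin (2*n)) : F :=
  q ^ ((if x = y then (1:ℤ) else 0) - (if x = pr n y then (1:ℤ) else 0))

def crossWeight (n : ℕ) (x z : Fin (2*n)) : F := q ^ (bar n z - bar n x) * eps n x * eps n z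

section

variable {n : ℕ}

section pr

@[simp] lemma pr_val (x : Fin (2*n)) : (pr n x : ℕ) = 2*n - 1 - x := rfl

lemma pr_pr (x : Fin (2*n)) : pr n (pr n x) = x := by
  ext; simp only [pr_val]; omega

lemma pr_ne_self (x : Fin (2*n)) : pr n x ≠ x := by
  intro h; have := congrArg Fin.val h; simp only [pr_val] at this; omega

lemma eq_pr_comm {x y : Fin (2*n)} : x = pr n y ↔ y = pr n x := by
  constructor <;> (rintro rfl; rw [pr_pr])

lemma lt_pr_comm {x y : Fin (2*n)} : x < pr n y ↔ y < pr n x := by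
  simp only [Fin.lt_def, pr_val]; omega

lemma bar_pr (x : Fin (2*n)) : bar n (pr n x) = - bar n x := by
  simp only [bar, pr_val]; split_ifs <;> omega

lemma eps_pr (x : Fin (2*n)) : eps n (pr n x) = - eps n x := by
  by_cases h : (x : ℕ) < n
  · have h' : ¬(pr n x : ℕ) < n := by rw [pr_val]; omega
    simp only [eps, if_pos h, if_neg h']
  · have h' : (pr n x : ℕ) < n := by rw [pr_val]; omega
    simp only [eps, if_pos h', if_neg h, neg_neg]

lemma eps_mul_eps_pr (x : Fin (2*n)) : eps n x * eps n (pr n x) = -1 := by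
  rw [eps_pr]; simp only [eps]; split_ifs <;> norm_num

end pr

section weights

lemma diagWeight_self (x : Fin (2*n)) : diagWeight n x x = q := by
  simp [diagWeight, (pr_ne_self x).symm]

lemma diagWeight_pr_right (x : Fin (2*n)) : diagWeight n x (pr n x) = q⁻¹ := by
  simp [diagWeight, (pr_ne_self x).symm, pr_pr]

lemma diagWeight_comm (x y : Fin (2*n)) : diagWeight n x y = diagWeight n y x := by
  unfold diagWeight
  grind [eq_pr_comm]

lemma diagWeight_pr_comm (x y : Fin (2*n)) :
    diagWeight n x (pr n y) = diagWeight n y (pr n x) := by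
  simp only [diagWeight, eq_pr_comm (x := x), pr_pr, eq_comm (a := x)]

lemma crossWeight_pr_pr (x y : Fin (2*n)) :
    crossWeight n (pr n x) (pr n y) = crossWeight n y x := by
  simp only [crossWeight, bar_pr, eps_pr]
  ring_nf

end weights

section Rmat

lemma Rmat_apply (x y z w : Fin (2*n)) :
    Rmat n (x, y) (z, w) = (if x = z ∧ y = w then diagWeight n x y else 0)
      + (if z = y ∧ w = x ∧ x < y then q - q⁻¹ else 0)
      - (if x < z ∧ y = pr n x ∧ w = pr n z then (q - q⁻¹) * crossWeight n x z else 0) := by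
  simp only [Rmat, E, Matrix.sub_apply, Matrix.add_apply, Matrix.smul_apply, Matrix.sum_apply,
    Matrix.kroneckerMap_apply, Matrix.single_apply,
    apply_ite (fun M : Matrix _ _ F => M (x, y) (z, w)), Matrix.zero_apply, smul_eq_mul,
    mul_ite, mul_one, mul_zero, ← ite_and]
  rw [sum_sum_ite_of_imp _ x y _ (by tauto), sum_sum_ite_of_imp _ x z _ (by tauto),
    sum_sum_ite_of_imp _ x z _ (by tauto)]
  simp only [mul_ite, mul_zero, mul_one, true_and, and_true, diagWeight, crossWeight]
  refine congrArg₂ _ (congrArg₂ _ (if_congr ?_ rfl rfl) (if_congr ?_ rfl rfl))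
    (if_congr ?_ rfl rfl) <;> grind

lemma sum_Rmat_mul (g : Fin (2*n) × Fin (2*n) → F) (x y : Fin (2*n)) :
    ∑ u, Rmat n (x, y) u * g u = diagWeight n x y * g (x, y)
      + (if x < y then (q - q⁻¹) * g (y, x) else 0)
      - (q - q⁻¹) * ∑ z, if x < z ∧ y = pr n x then crossWeight n x z * g (z, pr n z) else 0 := by
  simp only [Fintype.sum_prod_type, Rmat_apply]
  -- otherwise `sub_mul` would also split the scalar `q - q⁻¹`
  generalize q - q⁻¹ = t
  simp only [sub_mul, add_mul, ite_mul, zero_mul, mul_assoc, Finset.sum_sub_distrib,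
    Finset.sum_add_distrib, Finset.mul_sum, mul_ite, mul_zero, ite_and, Finset.sum_ite_eq,
    Finset.sum_ite_eq', Finset.sum_ite_irrel, Finset.sum_const_zero, Finset.mem_univ, if_true]

lemma sum_mul_Rmat (g : Fin (2*n) × Fin (2*n) → F) (z w : Fin (2*n)) :
    ∑ u, g u * Rmat n u (z, w) = diagWeight n z w * g (z, w)
      + (if w < z then (q - q⁻¹) * g (w, z) else 0)
      - (q - q⁻¹) * ∑ x, if x < z ∧ w = pr n z then crossWeight n x z * g (x, pr n x) else 0 := by
  simp only [Fintype.sum_prod_type, Rmat_apply]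
  generalize q - q⁻¹ = t
  simp only [mul_sub, mul_add, mul_ite, mul_zero, Finset.sum_sub_distrib, Finset.sum_add_distrib,
    Finset.mul_sum, ite_and, Finset.sum_ite_eq, Finset.sum_ite_eq', Finset.sum_ite_irrel,
    Finset.sum_const_zero, Finset.mem_univ, if_true]
  simp only [mul_comm (g _), mul_assoc]

lemma Rmat_apply_swap (x y z w : Fin (2*n)) : Rmat n (x, y) (z, w) = Rmat n (w, z) (y, x) := by
  simp only [Rmat_apply]
  refine congrArg₂ _ (congrArg₂ _ (ite_congr (by grind) (by grind [diagWeight_comm]) fun _ => rfl)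
    (if_congr (by grind) rfl rfl)) (ite_congr (propext ?_) ?_ fun _ => rfl)
  · grind [lt_pr_comm, pr_pr]
  · rintro ⟨-, rfl, rfl⟩; rw [crossWeight_pr_pr]

lemma Rmat_ne_zero_cases {x y z w : Fin (2*n)} (h : Rmat n (x, y) (z, w) ≠ 0) :
    (x = z ∧ y = w) ∨ (z = y ∧ w = x ∧ x < y) ∨ (x < z ∧ y = pr n x ∧ w = pr n z) := by
  by_contra h'
  simp only [not_or] at h'
  rw [Rmat_apply, if_neg (by tauto), if_neg (by tauto), if_neg (by tauto)] at h
  simp at h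

lemma lt_iff_lt_of_Rmat_ne_zero {x y z w : Fin (2*n)} (h : Rmat n (x, y) (z, w) ≠ 0) :
    z < y ↔ x < w := by
  rcases Rmat_ne_zero_cases h with ⟨rfl, rfl⟩ | ⟨rfl, rfl, -⟩ | ⟨-, rfl, rfl⟩
  · rfl
  · simp
  · exact lt_pr_comm

lemma ite_lt_Rmat_eq (x y z w : Fin (2*n)) :
    (if y < z then Rmat n (x, y) (z, w) else 0) = if w < x then Rmat n (w, z) (y, x) else 0 := by
  rw [Rmat_apply_swap]
  by_cases h : Rmat n (w, z) (y, x) = 0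
  · simp [h]
  · exact if_congr (lt_iff_lt_of_Rmat_ne_zero h) rfl rfl

lemma diagWeight_mul_Rmat {c : Fin (2*n) → F} {lam : F} (hc : ∀ k, c k * c (pr n k) = lam)
    (x y z w : Fin (2*n)) :
    diagWeight n z y * c z * c w * Rmat n (x, y) (z, w)
      = diagWeight n x w * c x * c y * Rmat n (x, y) (z, w) := by
  by_cases h : Rmat n (x, y) (z, w) = 0
  · simp [h]
  congr 1
  rcases Rmat_ne_zero_cases h with ⟨rfl, rfl⟩ | ⟨rfl, rfl, -⟩ | ⟨-, rfl, rfl⟩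
  · rfl
  · rw [diagWeight_self, diagWeight_self]; ring
  · rw [mul_assoc, mul_assoc, hc, hc, diagWeight_pr_comm]

lemma Rmat_apply_of_row_snd_pr (x z w : Fin (2*n)) :
    Rmat n (x, pr n z) (z, w) = if x = z ∧ w = pr n z then q⁻¹ else 0 := by
  rw [Rmat_apply]
  grind [pr_ne_self, pr_pr, diagWeight_pr_right]

lemma Rmat_apply_of_col_snd_pr (x y z : Fin (2*n)) :
    Rmat n (x, y) (z, pr n x) = if x = z ∧ y = pr n x then q⁻¹ else 0 := by
  rw [Rmat_apply]
  grind [pr_ne_self, pr_pr, diagWeight_pr_right]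

end Rmat

lemma reflection_equation_entry {c : Fin (2*n) → F} {lam : F}
    (hc : ∀ k, c k * c (pr n k) = lam) (i a j b : Fin (2*n)) :
    (∑ u, Rmat n (i, a) u * (c u.1 * Rmat n (j, u.2) (u.1, b))) * c b
      = c a * ∑ u, (c u.1 * Rmat n (u.1, a) (i, u.2)) * Rmat n u (j, b) := by
  rw [sum_Rmat_mul (fun u => c u.1 * Rmat n (j, u.2) (u.1, b)),
    sum_mul_Rmat (fun u => c u.1 * Rmat n (u.1, a) (i, u.2))]
  simp only [Rmat_apply_of_row_snd_pr, Rmat_apply_of_col_snd_pr, ← mul_ite_zero]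
  rw [Fintype.sum_eq_single j fun x hx => by simp [Ne.symm hx],
    Fintype.sum_eq_single i fun x hx => by simp [hx], ite_lt_Rmat_eq j i a b]
  simp only [true_and, ← ite_and]
  have hcross : (c j * if (i < j ∧ a = pr n i) ∧ b = pr n j then q⁻¹ else 0) * c b
      = c a * (c i * if (i < j ∧ b = pr n j) ∧ a = pr n i then q⁻¹ else 0) := by
    rw [if_congr (Q := (i < j ∧ b = pr n j) ∧ a = pr n i) (by tauto) rfl rfl]
    split_ifs with h
    · obtain ⟨⟨-, rfl⟩, rfl⟩ := h
      linear_combination q⁻¹ * (hc j - hc i)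
    · ring
  linear_combination diagWeight_mul_Rmat hc j a i b - (q - q⁻¹) * crossWeight n i j * hcross

theorem reflection_equation_of_diagonal {c : Fin (2*n) → F} {lam : F}
    (hc : ∀ k, c k * c (pr n k) = lam) :
    Rmat n * (Matrix.diagonal c ⊗ₖ (1 : Matrix (Fin (2*n)) (Fin (2*n)) F)) * Ru n *
        ((1 : Matrix (Fin (2*n)) (Fin (2*n)) F) ⊗ₖ Matrix.diagonal c)
      = ((1 : Matrix (Fin (2*n)) (Fin (2*n)) F) ⊗ₖ Matrix.diagonal c) * Ru n *
        (Matrix.diagonal c ⊗ₖ (1 : Matrix (Fin (2*n)) (Fin (2*n)) F)) * Rmat n := by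
  rw [← Matrix.diagonal_one, Matrix.diagonal_kronecker_diagonal,
    Matrix.diagonal_kronecker_diagonal]
  ext ⟨i, a⟩ ⟨j, b⟩
  rw [Matrix.mul_diagonal, Matrix.mul_apply, Matrix.mul_apply]
  simp only [Matrix.mul_diagonal, Matrix.diagonal_mul, Ru, Matrix.of_apply, mul_assoc, one_mul]
  rw [reflection_equation_entry hc, Finset.mul_sum]
  exact Finset.sum_congr rfl fun u _ => by ring

end

theorem reflection_equation_general (n : ℕ) (c : Fin (2*n) → F) (lam : F)
    (hc : ∀ k, c k * c (pr n k) = lam) :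
    (Rmat n * (Matrix.diagonal c ⊗ₖ (1 : Matrix (Fin (2*n)) (Fin (2*n)) F)) * Ru n *
        ((1 : Matrix (Fin (2*n)) (Fin (2*n)) F) ⊗ₖ Matrix.diagonal c)
      = ((1 : Matrix (Fin (2*n)) (Fin (2*n)) F) ⊗ₖ Matrix.diagonal c) * Ru n *
        (Matrix.diagonal c ⊗ₖ (1 : Matrix (Fin (2*n)) (Fin (2*n)) F)) * Rmat n)
    ∧
    (Rmat n * (Jm n ⊗ₖ (1 : Matrix (Fin (2*n)) (Fin (2*n)) F)) * Ru n *
        ((1 : Matrix (Fin (2*n)) (Fin (2*n)) F) ⊗ₖ Jm n)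
      = ((1 : Matrix (Fin (2*n)) (Fin (2*n)) F) ⊗ₖ Jm n) * Ru n *
        (Jm n ⊗ₖ (1 : Matrix (Fin (2*n)) (Fin (2*n)) F)) * Rmat n) :=
  ⟨reflection_equation_of_diagonal hc, reflection_equation_of_diagonal eps_mul_eps_pr⟩

/-- any diagonal matrix C = diag(c₁,…,c_{2n}) with c_k c_{k′} = λ ≠ 0 for
    all k satisfies the reflection equation R C₁ R^u C₂ = C₂ R^u C₁ R; in particular this
    holds for C = J = Σ_k ε_k e_{kk}. -/
theorem reflection_equation (n : ℕ) (hn : 2 ≤ n) (c : Fin (2*n) → F) (lam : F)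
    (hlam : lam ≠ 0) (hc : ∀ k, c k * c (pr n k) = lam) :
    (Rmat n * (Matrix.diagonal c ⊗ₖ (1 : Matrix (Fin (2*n)) (Fin (2*n)) F)) * Ru n *
        ((1 : Matrix (Fin (2*n)) (Fin (2*n)) F) ⊗ₖ Matrix.diagonal c)
      = ((1 : Matrix (Fin (2*n)) (Fin (2*n)) F) ⊗ₖ Matrix.diagonal c) * Ru n *
        (Matrix.diagonal c ⊗ₖ (1 : Matrix (Fin (2*n)) (Fin (2*n)) F)) * Rmat n)
    ∧
    (Rmat n * (Jm n ⊗ₖ (1 : Matrix (Fin (2*n)) (Fin (2*n)) F)) * Ru n *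
        ((1 : Matrix (Fin (2*n)) (Fin (2*n)) F) ⊗ₖ Jm n)
      = ((1 : Matrix (Fin (2*n)) (Fin (2*n)) F) ⊗ₖ Jm n) * Ru n *
        (Jm n ⊗ₖ (1 : Matrix (Fin (2*n)) (Fin (2*n)) F)) * Rmat n) :=
  reflection_equation_general n c lam hc

end CI
end
end

section
/- Let C = diag(c₁,…,c_{2n}) be a diagonal 2n×2n matrix over F whose entries satisfy c_k c_{k′} = λ for all k = 1,…,2n, for some fixed λ ≠ 0. Then the matrix C ⊗ C commutes with the R-matrix: (C ⊗ C) R = R (C ⊗ C). -/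
open scoped Kronecker

set_option synthInstance.maxHeartbeats 1000000
set_option maxHeartbeats 1000000

noncomputable section

/-!
`C ⊗ C` is diagonal with entry `c i * c k` at `(i, k)`, and every term of `R` is a multiple of
a matrix unit `e_{(i,k),(j,l)}` of one of the shapes `(i,j) → (i,j)`, `(i,j) → (j,i)` or
`(i,i′) → (j,j′)`. In each case `c i * c k = c j * c l`, in the last one because both sides
equal `λ`; and a diagonal matrix commutes with a matrix unit whose row and column carry the
same diagonal entry.
-/

namespace Matrix

variable {m α : Type*} [Fintype m] [DecidableEq m]

theorem diagonal_mul_single [NonUnitalNonAssocSemiring α] (d : m → α) (i j : m) (a : α) :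
    diagonal d * single i j a = single i j (d i * a) := by
  ext k l
  by_cases hk : i = k <;> simp [single_apply, diagonal_mul, hk]

theorem single_mul_diagonal [NonUnitalNonAssocSemiring α] (d : m → α) (i j : m) (a : α) :
    single i j a * diagonal d = single i j (a * d j) := by
  ext k l
  by_cases hl : j = l <;> simp [single_apply, mul_diagonal, hl]

theorem commute_diagonal_single [NonUnitalNonAssocCommSemiring α] {d : m → α} {i j : m}
    (h : d i = d j) (a : α) : Commute (diagonal d) (single i j a) := by
  rw [Commute, SemiconjBy, diagonal_mul_single, single_mul_diagonal, h, mul_comm]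

end Matrix

namespace CI

open Matrix

theorem commute_diagonal_kronecker_E {n : ℕ} {c : Fin (2*n) → F} {i j k l : Fin (2*n)}
    (h : c i * c k = c j * c l) :
    Commute (diagonal c ⊗ₖ diagonal c) (E n i j ⊗ₖ E n k l) := by
  rw [diagonal_kronecker_diagonal, E, E, single_kronecker_single]
  exact commute_diagonal_single h _

theorem diag_commutes_with_R_general (n : ℕ) (c : Fin (2*n) → F) (lam : F)
    (hc : ∀ k, c k * c (pr n k) = lam) :
    (Matrix.diagonal c ⊗ₖ Matrix.diagonal c) * Rmat n
      = Rmat n * (Matrix.diagonal c ⊗ₖ Matrix.diagonal c) := by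
  change Commute _ (Rmat n)
  refine .sub_right (.add_right ?diagonal (.smul_right ?swap _)) (.smul_right ?reflect _)
  all_goals refine .sum_right _ _ _ fun i _ => .sum_right _ _ _ fun j _ => ?_
  case diagonal => exact .smul_right (commute_diagonal_kronecker_E rfl) _
  case swap =>
    split_ifs
    · exact commute_diagonal_kronecker_E (mul_comm _ _)
    · exact .zero_right _
  case reflect =>
    split_ifs
    · exact .smul_right (commute_diagonal_kronecker_E (by rw [hc, hc])) _
    · exact .zero_right _

/-- any diagonal matrix C = diag(c₁,…,c_{2n}) with c_k c_{k′} = λ ≠ 0 for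
    all k satisfies (C ⊗ C) R = R (C ⊗ C). -/
theorem diag_commutes_with_R (n : ℕ) (hn : 2 ≤ n) (c : Fin (2*n) → F) (lam : F)
    (hlam : lam ≠ 0) (hc : ∀ k, c k * c (pr n k) = lam) :
    (Matrix.diagonal c ⊗ₖ Matrix.diagonal c) * Rmat n
      = Rmat n * (Matrix.diagonal c ⊗ₖ Matrix.diagonal c) :=
  diag_commutes_with_R_general n c lam hc

end CI
end
end

section
/- Let Δ′ : U_q(sp_{2n}) → U_q(sp_{2n}) ⊗_F U_q(sp_{2n}) be any F-algebra homomorphism satisfying Δ′(t_{ij}) = Σ_{k=1}^{2n} t_{ik} ⊗ t_{kj} and Δ′(t̄_{ij}) = Σ_{k=1}^{2n} t̄_{ik} ⊗ t̄_{kj} for all i,j. Then for all i,j one has Δ′(s_{ij}) = Σ_{k,l=1}^{2n} t_{ik} t̄_{jl} ⊗ s_{kl}. In particular, Δ′ maps U_q^{tw}(gl_n) into U_q(sp_{2n}) ⊗ U_q^{tw}(gl_n), i.e. U_q^{tw}(gl_n) is a left coideal subalgebra. -/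
noncomputable section

set_option synthInstance.maxHeartbeats 1000000
set_option maxHeartbeats 1000000

namespace CI

/-- The diagonal entries of D = diag(qⁿ,…,q,q⁻¹,…,q⁻ⁿ): D_{ii} = q^{ī}. -/
def dd (n : ℕ) (i : Fin (2*n)) : F := q ^ (bar n i)

/-- The entries of the R-matrix R = Σ_{i,j} q^{δ_{ij}−δ_{ij′}} e_{ii} ⊗ e_{jj}
    + (q−q⁻¹) Σ_{i<j} e_{ij} ⊗ e_{ji}
    − (q−q⁻¹) Σ_{i<j} q^{j̄−ī} ε_i ε_j e_{ij} ⊗ e_{i′j′}. -/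
def Rm (n : ℕ) (p s : Fin (2*n) × Fin (2*n)) : F :=
  (if p.1 = s.1 ∧ p.2 = s.2 then
      q ^ ((if p.1 = p.2 then (1:ℤ) else 0) - (if p.1 = pr n p.2 then (1:ℤ) else 0)) else 0)
  + (if p.1 < p.2 ∧ s.1 = p.2 ∧ s.2 = p.1 then q - q⁻¹ else 0)
  - (if p.1 < s.1 ∧ p.2 = pr n p.1 ∧ s.2 = pr n s.1 then
      (q - q⁻¹) * q ^ (bar n s.1 - bar n p.1) * eps n p.1 * eps n s.1 else 0)

/-- Generators t_{ij}, t̄_{ij} of the extended algebra. -/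
inductive Gen (n : ℕ) : Type
  | t (i j : Fin (2*n)) : Gen n
  | tb (i j : Fin (2*n)) : Gen n

/-- The free F-algebra on the generators. -/
abbrev FA (n : ℕ) : Type := FreeAlgebra F (Gen n)

def tF (n : ℕ) (i j : Fin (2*n)) : FA n := FreeAlgebra.ι F (Gen.t i j)
def tbF (n : ℕ) (i j : Fin (2*n)) : FA n := FreeAlgebra.ι F (Gen.tb i j)

/-- The defining relations of the RTT presentation U_q(sp_{2n}): the triangularity
    and diagonal relations, the entrywise RTT relations R T₁ T₂ = T₂ T₁ R,
    R T̄₁ T̄₂ = T̄₂ T̄₁ R, R T̄₁ T₂ = T₂ T̄₁ R, and the entrywise central relations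
    T D Tᵗ D⁻¹ = T̄ D T̄ᵗ D⁻¹ = I, D Tᵗ D⁻¹ T = D T̄ᵗ D⁻¹ T̄ = I
    (where ᵗ is the twisted transposition e_{ij}ᵗ = ε_i ε_j e_{j′i′}). -/
inductive rel (n : ℕ) : FA n → FA n → Prop
  | t_upper (i j : Fin (2*n)) (h : i < j) : rel n (tF n i j) 0
  | tb_lower (i j : Fin (2*n)) (h : j < i) : rel n (tbF n i j) 0
  | t_tb_diag (i : Fin (2*n)) : rel n (tF n i i * tbF n i i) 1
  | tb_t_diag (i : Fin (2*n)) : rel n (tbF n i i * tF n i i) 1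
  | rtt_tt (i a j b : Fin (2*n)) :
      rel n (∑ k, ∑ c, Rm n (i, a) (k, c) • (tF n k j * tF n c b))
            (∑ c, ∑ l, Rm n (l, c) (j, b) • (tF n a c * tF n i l))
  | rtt_bb (i a j b : Fin (2*n)) :
      rel n (∑ k, ∑ c, Rm n (i, a) (k, c) • (tbF n k j * tbF n c b))
            (∑ c, ∑ l, Rm n (l, c) (j, b) • (tbF n a c * tbF n i l))
  | rtt_bt (i a j b : Fin (2*n)) :
      rel n (∑ k, ∑ c, Rm n (i, a) (k, c) • (tbF n k j * tF n c b))
            (∑ c, ∑ l, Rm n (l, c) (j, b) • (tF n a c * tbF n i l))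
  | cent_t1 (i j : Fin (2*n)) :
      rel n (∑ k, (dd n k * (dd n j)⁻¹ * eps n (pr n k) * eps n (pr n j)) •
              (tF n i k * tF n (pr n j) (pr n k)))
            (if i = j then 1 else 0)
  | cent_tb1 (i j : Fin (2*n)) :
      rel n (∑ k, (dd n k * (dd n j)⁻¹ * eps n (pr n k) * eps n (pr n j)) •
              (tbF n i k * tbF n (pr n j) (pr n k)))
            (if i = j then 1 else 0)
  | cent_t2 (i j : Fin (2*n)) :
      rel n (∑ k, (dd n i * (dd n k)⁻¹ * eps n (pr n i) * eps n (pr n k)) •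
              (tF n (pr n k) (pr n i) * tF n k j))
            (if i = j then 1 else 0)
  | cent_tb2 (i j : Fin (2*n)) :
      rel n (∑ k, (dd n i * (dd n k)⁻¹ * eps n (pr n i) * eps n (pr n k)) •
              (tbF n (pr n k) (pr n i) * tbF n k j))
            (if i = j then 1 else 0)

/-- The RTT presentation U_q(sp_{2n}). -/
abbrev Usp (n : ℕ) : Type := RingQuot (rel n)

/-- The generator t_{ij} of U_q(sp_{2n}). -/
def tU (n : ℕ) (i j : Fin (2*n)) : Usp n := RingQuot.mkAlgHom F (rel n) (tF n i j)

/-- The generator t̄_{ij} of U_q(sp_{2n}). -/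
def tbU (n : ℕ) (i j : Fin (2*n)) : Usp n := RingQuot.mkAlgHom F (rel n) (tbF n i j)

/-- The entries s_{ij} = Σ_{k=j}^{i} ε_k t_{ik} t̄_{jk} of the matrix S = T J T̄^u. -/
def sU (n : ℕ) (i j : Fin (2*n)) : Usp n :=
  ∑ k ∈ Finset.Icc j i, eps n k • (tU n i k * tbU n j k)

/-- The entries s̄_{ij} = ε_i ε_j Σ_{k=j}^{i} ε_{k′} t̄_{i′k′} t_{j′k′} of the
    matrix S̄ = T̄^{ut} Jᵗ Tᵗ. -/
def sbU (n : ℕ) (i j : Fin (2*n)) : Usp n :=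
  (eps n i * eps n j) • ∑ k ∈ Finset.Icc j i,
    eps n (pr n k) • (tbU n (pr n i) (pr n k) * tU n (pr n j) (pr n k))

/-- The twisted quantized enveloping algebra U_q^{tw}(gl_n): the subalgebra of
    U_q(sp_{2n}) generated by the entries of S. -/
def Utw (n : ℕ) : Subalgebra F (Usp n) :=
  Algebra.adjoin F (Set.range fun p : Fin (2*n) × Fin (2*n) => sU n p.1 p.2)

open scoped TensorProduct

lemma tU_eq_zero (n : ℕ) {i j : Fin (2*n)} (h : i < j) : tU n i j = 0 := by
  have := RingQuot.mkAlgHom_rel F (rel.t_upper i j h)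
  rw [tU, this, map_zero]

lemma tbU_eq_zero (n : ℕ) {i j : Fin (2*n)} (h : j < i) : tbU n i j = 0 := by
  have := RingQuot.mkAlgHom_rel F (rel.tb_lower i j h)
  rw [tbU, this, map_zero]

/-- for any algebra homomorphism Δ′ with Δ′(t_{ij}) = Σ_k t_{ik} ⊗ t_{kj}
    and Δ′(t̄_{ij}) = Σ_k t̄_{ik} ⊗ t̄_{kj}, one has
    Δ′(s_{ij}) = Σ_{k,l} t_{ik} t̄_{jl} ⊗ s_{kl}; in particular U_q^{tw}(gl_n) is a
    left coideal subalgebra of U_q(sp_{2n}). -/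
theorem coideal (n : ℕ) (hn : 2 ≤ n)
    (Δ : Usp n →ₐ[F] (Usp n ⊗[F] Usp n))
    (ht : ∀ i j : Fin (2*n), Δ (tU n i j) = ∑ k, tU n i k ⊗ₜ[F] tU n k j)
    (htb : ∀ i j : Fin (2*n), Δ (tbU n i j) = ∑ k, tbU n i k ⊗ₜ[F] tbU n k j) :
    (∀ i j : Fin (2*n),
        Δ (sU n i j) = ∑ k, ∑ l, (tU n i k * tbU n j l) ⊗ₜ[F] sU n k l) ∧
    (∀ x ∈ Utw n, Δ x ∈ Submodule.span F
        {z : Usp n ⊗[F] Usp n | ∃ a b : Usp n, b ∈ Utw n ∧ z = a ⊗ₜ[F] b}) := by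
  classical
  set f : Fin (2*n) → Fin (2*n) → Fin (2*n) → Fin (2*n) → Fin (2*n) → Usp n ⊗[F] Usp n :=
    fun i j a b m => eps n m • ((tU n i a * tbU n j b) ⊗ₜ[F] (tU n a m * tbU n b m)) with hf
  have hvanish : ∀ (i j a b m : Fin (2*n)),
      (¬ a ≤ i ∨ ¬ j ≤ b ∨ ¬ b ≤ m ∨ ¬ m ≤ a) → f i j a b m = 0 := by
    intro i j a b m hc
    rcases hc with h|h|h|h
    · simp only [hf]; rw [tU_eq_zero n (lt_of_not_ge h)]; simp
    · simp only [hf]; rw [tbU_eq_zero n (lt_of_not_ge h)]; simp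
    · simp only [hf]; rw [tbU_eq_zero n (lt_of_not_ge h)]; simp
    · simp only [hf]; rw [tU_eq_zero n (lt_of_not_ge h)]; simp
  have key : ∀ i j : Fin (2*n),
      Δ (sU n i j) = ∑ k, ∑ l, (tU n i k * tbU n j l) ⊗ₜ[F] sU n k l := by
    intro i j
    have step : Δ (sU n i j) = ∑ m ∈ Finset.Icc j i, ∑ a, ∑ b, f i j a b m := by
      rw [sU, map_sum]
      refine Finset.sum_congr rfl fun m _ => ?_
      rw [map_smul, map_mul, ht, htb, Finset.sum_mul_sum]
      simp only [hf, Algebra.TensorProduct.tmul_mul_tmul, Finset.smul_sum]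
    have rhs : ∀ a b : Fin (2*n),
        (tU n i a * tbU n j b) ⊗ₜ[F] sU n a b = ∑ m ∈ Finset.Icc b a, f i j a b m := by
      intro a b
      rw [sU, TensorProduct.tmul_sum]
      exact Finset.sum_congr rfl fun m _ => by rw [hf, TensorProduct.tmul_smul]
    rw [step]
    have lhs_eq : (∑ m ∈ Finset.Icc j i, ∑ a, ∑ b, f i j a b m)
        = ∑ m, ∑ a, ∑ b, f i j a b m := by
      refine Finset.sum_subset (Finset.subset_univ _) ?_
      intro m _ hm
      refine Finset.sum_eq_zero fun a _ => Finset.sum_eq_zero fun b _ => ?_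
      rw [Finset.mem_Icc, not_and_or] at hm
      apply hvanish
      rcases hm with h|h
      · by_cases hb : j ≤ b
        · exact Or.inr (Or.inr (Or.inl fun hbm => h (hb.trans hbm)))
        · exact Or.inr (Or.inl hb)
      · by_cases ha : a ≤ i
        · exact Or.inr (Or.inr (Or.inr fun hma => h (hma.trans ha)))
        · exact Or.inl ha
    rw [lhs_eq, Finset.sum_comm]
    refine Finset.sum_congr rfl fun a _ => ?_
    rw [Finset.sum_comm]
    refine Finset.sum_congr rfl fun b _ => ?_
    rw [rhs]
    symm
    refine Finset.sum_subset (Finset.subset_univ _) ?_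
    intro m _ hm
    rw [Finset.mem_Icc, not_and_or] at hm
    exact hvanish i j a b m (by tauto)
  refine ⟨key, ?_⟩
  intro x hx
  set M := Submodule.span F
      {z : Usp n ⊗[F] Usp n | ∃ a b : Usp n, b ∈ Utw n ∧ z = a ⊗ₜ[F] b} with hM
  have hmulmem : ∀ x ∈ M, ∀ y ∈ M, x * y ∈ M := by
    intro x hx y hy
    induction hx using Submodule.span_induction with
    | mem u hu =>
      induction hy using Submodule.span_induction with
      | mem v hv =>
        obtain ⟨a, b, hb, rfl⟩ := hu
        obtain ⟨c, d, hd, rfl⟩ := hv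
        exact Submodule.subset_span ⟨a * c, b * d, mul_mem hb hd, by
          rw [Algebra.TensorProduct.tmul_mul_tmul]⟩
      | zero => rw [mul_zero]; exact M.zero_mem
      | add v w _ _ hv hw => rw [mul_add]; exact M.add_mem hv hw
      | smul r v _ hv => rw [mul_smul_comm]; exact M.smul_mem r hv
    | zero => rw [zero_mul]; exact M.zero_mem
    | add u v _ _ hu hv => rw [add_mul]; exact M.add_mem hu hv
    | smul r u _ hu => rw [smul_mul_assoc]; exact M.smul_mem r hu
  induction hx using Algebra.adjoin_induction with
  | mem u hu =>
    obtain ⟨⟨k, l⟩, rfl⟩ := hu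
    rw [key]
    refine Submodule.sum_mem _ fun a _ => Submodule.sum_mem _ fun b _ => ?_
    exact Submodule.subset_span ⟨_, _, Algebra.subset_adjoin ⟨(a, b), rfl⟩, rfl⟩
  | algebraMap r =>
    rw [AlgHom.commutes, Algebra.TensorProduct.algebraMap_apply]
    exact Submodule.subset_span ⟨_, 1, one_mem _, rfl⟩
  | add u v _ _ hu hv => rw [map_add]; exact M.add_mem hu hv
  | mul u v _ _ hu hv => rw [map_mul]; exact hmulmem _ hu _ hv

end CI
end
end
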